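/- arXiv:2601.10346 — 7 statements merged into one kernel-verified Lean document; each statement's English description precedes it below -/
import Mathlib

section
/- Let $B \subseteq A$ be rings with $A$ a commutative integral domain that is finitely generated as a $B$-module. Then the localization of $A$ at the set of nonzero elements of $B$ equals the fraction field of $A$: $\mathrm{Frac}(A) = A (B \setminus \{0\})^{-1}$. -/
/-- Let `B ⊆ A` be rings, with `A` a commutative integral domain
finitely generated as a `B`-module.  Then the localization of `A` at the set of
nonzero elements of `B` is the field of fractions of `A`:
`Frac(A) = A (B \ {0})⁻¹`. -/
theorem localization_at_base_is_fractionField {A : Type*} [CommRing A] [IsDomain A]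
    (B : Subring A) [Module.Finite B A]
    (S : Submonoid A) (hS : (S : Set A) = (B : Set A) \ {0}) :
    IsFractionRing A (Localization S) := by
  have hSle : S ≤ nonZeroDivisors A := by
    intro x hx
    have hx' : x ∈ (B : Set A) \ {0} := hS ▸ hx
    exact mem_nonZeroDivisors_of_ne_zero hx'.2
  have hint : Algebra.IsIntegral B A := Algebra.IsIntegral.of_finite B A
  have h' : ∀ x : nonZeroDivisors A, ∃ m : A, m * x ∈ S := by
    rintro ⟨x, hx⟩
    have halg : IsAlgebraic B x := (Algebra.IsIntegral.isIntegral (R := B) x).isAlgebraic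
    obtain ⟨r, hr, m, hm⟩ := halg.exists_nonzero_dvd hx
    refine ⟨m, ?_⟩
    have hmx : m * x = (r : A) := by
      rw [mul_comm, ← hm]; rfl
    have : m * x ∈ (S : Set A) := by
      rw [hS, hmx]
      exact ⟨r.2, fun h0 => hr (Subtype.ext h0)⟩
    exact this
  exact IsLocalization.isLocalization_of_is_exists_mul_mem (S := Localization S) S (nonZeroDivisors A) hSle h'
end

section
/- Let $U$ be a principal Galois $\Gamma$-order, and let $U_- = \{X \in U : X(1_\Gamma) = 0\}$, where $X \mapsto X(1_\Gamma)$ denotes evaluation of $X = \sum_\mu l_\mu \mu$ at $1$, i.e., $X(1) = \sum_\mu l_\mu$. Then $U_-$ is a $\Gamma$-submodule of $U$ and $U = \Gamma \oplus U_-$ as $\Gamma$-modules. -/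
noncomputable section

/-- Left multiplication by `l` as an additive endomorphism of `L`. -/
def mulL {L : Type*} [Field L] (l : L) : AddMonoid.End L := AddMonoidHom.mulLeft l

/-- A ring automorphism viewed as an additive endomorphism. -/
def autEnd {L : Type*} [Field L] (μ : L ≃+* L) : AddMonoid.End L :=
  (μ : L →+* L).toAddMonoidHom

/-- The subring of `L` of elements fixed by every member of `W`. -/
def fixedSubring {L : Type*} [Field L] (W : Subgroup (L ≃+* L)) : Subring L where
  carrier := {x | ∀ w ∈ W, w x = x}
  mul_mem' := by intro a b ha hb; intro w hw; simp [map_mul, ha w hw, hb w hw]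
  one_mem' := by intro w hw; simp
  add_mem' := by intro a b ha hb; intro w hw; simp [map_add, ha w hw, hb w hw]
  zero_mem' := by intro w hw; simp
  neg_mem' := by intro a ha w hw; simp [map_neg, ha w hw]

/-- A Galois ring setting `(Λ, 𝓜, W)`: a Noetherian integral domain `Λ` realized as a
subring of its fraction field `L`, a submonoid `𝓜` of automorphisms of `L` restricting
to automorphisms of `Λ`, and a finite group `W` of automorphisms of `Λ` acting on `𝓜`
by conjugation with finitely many orbits, with `𝓜` separating
(`𝓜 𝓜⁻¹ ∩ W = {1}`). -/
structure GaloisSetting (L : Type*) [Field L] where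
  Λ : Subring L
  noeth : IsNoetherianRing Λ
  frac : ∀ x : L, ∃ a b : Λ, (b : L) ≠ 0 ∧ x = a / b
  M : Submonoid (L ≃+* L)
  W : Subgroup (L ≃+* L)
  finW : Finite W
  hM : ∀ μ ∈ M, (∀ x ∈ Λ, μ x ∈ Λ) ∧ ∀ x ∈ Λ, μ.symm x ∈ Λ
  hW : ∀ w ∈ W, ∀ x ∈ Λ, w x ∈ Λ
  norm : ∀ w ∈ W, ∀ μ ∈ M, w * μ * w⁻¹ ∈ M
  orbits : ∃ T : Finset (L ≃+* L), ↑T ⊆ (M : Set (L ≃+* L)) ∧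
    ∀ μ ∈ M, ∃ ν ∈ T, ∃ w ∈ W, μ = w * ν * w⁻¹
  separating : ∀ μ ∈ M, ∀ ν ∈ M, μ * ν⁻¹ ∈ W → μ = ν

namespace GaloisSetting

variable {L : Type*} [Field L] (S : GaloisSetting L)

/-- `Γ = Λᵂ`, the invariants of `Λ` under `W`. -/
def Γ : Subring L := S.Λ ⊓ fixedSubring S.W

/-- `K = Lᵂ`, the invariants of `L` under `W` (the fraction field of `Γ`). -/
def K : Subring L := fixedSubring S.W

/-- The skew monoid ring `𝓛 = L * 𝓜`, realized concretely as the subring of additive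
endomorphisms of `L` generated by left multiplications by elements of `L` and by the
automorphisms in `𝓜`; its elements are exactly the finite sums `Σ l_μ μ`. -/
def skewL : Subring (AddMonoid.End L) :=
  Subring.closure ({f | ∃ l : L, f = mulL l} ∪ {f | ∃ μ ∈ S.M, f = autEnd μ})

/-- `𝓚 = 𝓛ᵂ`: the elements of the skew monoid ring fixed by conjugation by `W`. -/
def invK : Set (AddMonoid.End L) :=
  {X | X ∈ S.skewL ∧ ∀ w : L ≃+* L, w ∈ S.W → autEnd w * X * autEnd w.symm = X}

/-- `U` is a Galois `Γ`-ring in `𝓚 = (L * 𝓜)ᵂ`: `Λ` is a Noetherian `Γ`-module,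
`Γ ⊆ U ⊆ 𝓚`, and `K U = 𝓚`. -/
structure IsGaloisRing (U : Subring (AddMonoid.End L)) : Prop where
  lambdaNoeth : ∀ N : AddSubgroup L, (N : Set L) ⊆ S.Λ →
    (∀ γ ∈ S.Γ, ∀ x ∈ N, γ * x ∈ N) →
    ∃ s : Finset L, ↑s ⊆ (N : Set L) ∧ ∀ x ∈ N,
      x ∈ AddSubgroup.closure {y | ∃ γ ∈ S.Γ, ∃ a ∈ (s : Set L), y = γ * a}
  gammaSub : ∀ γ ∈ S.Γ, mulL γ ∈ U
  subInvK : ∀ X ∈ U, X ∈ S.invK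
  KU : ∀ X ∈ S.invK,
    X ∈ AddSubgroup.closure {f | ∃ k ∈ S.K, ∃ u ∈ U, f = mulL k * u}

/-- `U` is a principal Galois `Γ`-order: a Galois `Γ`-ring whose elements, viewed as
operators on `L`, preserve `Γ`. -/
structure IsPrincipalGaloisOrder (U : Subring (AddMonoid.End L))
    extends GaloisSetting.IsGaloisRing S U : Prop where
  princ : ∀ X ∈ U, ∀ γ : L, γ ∈ S.Γ → X γ ∈ S.Γ

end GaloisSetting

/-!
Since `U` is principal and `1 ∈ Γ`, every `X ∈ U` has `X(1) ∈ Γ`, so `X = X(1) + (X - X(1))`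
with `X - X(1) ∈ U₋`. The sum is direct because the multiplication operator by `γ` sends `1`
to `γ`, so it lies in `U₋` only for `γ = 0`.
-/

section

variable {L : Type*} [Field L]

theorem mulL_apply_one (l : L) : mulL l 1 = l := mul_one l

theorem mulL_zero : mulL (0 : L) = 0 :=
  AddMonoidHom.ext fun x => zero_mul x

/-- The `Γ`-module `U₋` of the paper. -/
def kerEvalOne (U : Subring (AddMonoid.End L)) : AddSubgroup (AddMonoid.End L) where
  carrier := {X | X ∈ U ∧ X 1 = 0}
  zero_mem' := ⟨U.zero_mem, rfl⟩
  add_mem' := fun {X Y} ⟨hX, hX1⟩ ⟨hY, hY1⟩ =>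
    ⟨U.add_mem hX hY, show X 1 + Y 1 = 0 by rw [hX1, hY1, add_zero]⟩
  neg_mem' := fun {X} ⟨hX, hX1⟩ =>
    ⟨U.neg_mem hX, show -X 1 = 0 by rw [hX1, neg_zero]⟩

variable {U : Subring (AddMonoid.End L)}

theorem mulL_mul_mem_kerEvalOne {l : L} {Y : AddMonoid.End L} (hl : mulL l ∈ U)
    (hY : Y ∈ kerEvalOne U) : mulL l * Y ∈ kerEvalOne U :=
  ⟨U.mul_mem hl hY.1, show l * Y 1 = 0 by rw [hY.2, mul_zero]⟩

theorem sub_mulL_apply_one_mem_kerEvalOne {X : AddMonoid.End L} (hX : X ∈ U)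
    (hX1 : mulL (X 1) ∈ U) : X - mulL (X 1) ∈ kerEvalOne U :=
  ⟨U.sub_mem hX hX1, show X 1 - X 1 * 1 = 0 by rw [mul_one, sub_self]⟩

end

theorem GaloisSetting.IsPrincipalGaloisOrder.apply_one_mem_Γ {L : Type*} [Field L]
    {S : GaloisSetting L} {U : Subring (AddMonoid.End L)} (hU : S.IsPrincipalGaloisOrder U)
    {X : AddMonoid.End L} (hX : X ∈ U) : X 1 ∈ S.Γ :=
  hU.princ X hX 1 (one_mem _)

open GaloisSetting in
/-- Let `U` be a principal Galois `Γ`-order and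
`U₋ = {X ∈ U : X(1) = 0}` (evaluation of operators at `1`).  Then `U₋` is a
`Γ`-submodule of `U` and `U = Γ ⊕ U₋` as `Γ`-modules. -/
theorem principalGaloisOrder_decomposition {L : Type*} [Field L] (S : GaloisSetting L)
    (U : Subring (AddMonoid.End L)) (hU : S.IsPrincipalGaloisOrder U) :
    (∀ X ∈ U, ∀ Y ∈ U, X (1 : L) = 0 → Y (1 : L) = 0 →
        X + Y ∈ U ∧ (X + Y) (1 : L) = 0 ∧ -X ∈ U ∧ (-X) (1 : L) = 0) ∧
    (∀ γ ∈ S.Γ, ∀ Y ∈ U, Y (1 : L) = 0 → mulL γ * Y ∈ U ∧ (mulL γ * Y) (1 : L) = 0) ∧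
    (∀ X ∈ U, ∃ γ ∈ S.Γ, ∃ Y ∈ U, Y (1 : L) = 0 ∧ X = mulL γ + Y) ∧
    (∀ γ ∈ S.Γ, mulL γ ∈ U → (mulL γ : AddMonoid.End L) (1 : L) = 0 →
        mulL γ = (0 : AddMonoid.End L)) := by
  refine ⟨fun X hX Y hY hX1 hY1 => ?_, fun γ hγ Y hY hY1 => ?_, fun X hX => ?_,
    fun γ _ _ hγ1 => ?_⟩
  · obtain ⟨hXY, hXY1⟩ := (kerEvalOne U).add_mem ⟨hX, hX1⟩ ⟨hY, hY1⟩
    obtain ⟨hnX, hnX1⟩ := (kerEvalOne U).neg_mem ⟨hX, hX1⟩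
    exact ⟨hXY, hXY1, hnX, hnX1⟩
  · exact mulL_mul_mem_kerEvalOne (hU.gammaSub γ hγ) ⟨hY, hY1⟩
  · have hXΓ := hU.apply_one_mem_Γ hX
    obtain ⟨hY, hY1⟩ := sub_mulL_apply_one_mem_kerEvalOne hX (hU.gammaSub _ hXΓ)
    exact ⟨X 1, hXΓ, _, hY, hY1, (add_sub_cancel _ _).symm⟩
  · rw [mulL_apply_one] at hγ1
    rw [hγ1, mulL_zero]
end
end

section
/- Let $U$ be a principal Galois $\Gamma$-order. Then $\Gamma$ is a maximal commutative subalgebra of $U$: if $X \in U$ commutes with every element of $\Gamma$, then $X \in \Gamma$. -/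
noncomputable section

/-!
Write `X ∈ U ⊆ L * 𝓜` as `Σ c_μ μ`; by Dedekind's independence of characters this normal form is
unique. Commuting with `γ ∈ Γ` then gives `c_μ (μ γ - γ) = 0`, so every `μ` in the support fixes
`Γ`, hence its fraction field `Lᵂ`, hence lies in `W` by Artin's theorem, and separation forces
`μ = 1`. Thus `X` is multiplication by `c_1 = X 1 ∈ Γ`.
-/

open Finsupp

section SkewOperators

variable {L : Type*} [Field L]

@[simp] lemma mulL_apply (l x : L) : mulL l x = l * x := rfl

@[simp] lemma autEnd_apply (μ : L ≃+* L) (x : L) : autEnd μ x = μ x := rfl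

lemma autEnd_one : autEnd (1 : L ≃+* L) = 1 := rfl

lemma mulL_one : mulL (1 : L) = 1 := DFunLike.ext _ _ one_mul

/-- `c ↦ Σ_μ c μ · μ`, the normal form of the elements of `L * 𝓜`. -/
def skewSum : ((L ≃+* L) →₀ L) →+ AddMonoid.End L :=
  liftAddHom fun μ => (AddMonoidHom.mulRight (autEnd μ)).comp AddMonoid.End.mulLeft

lemma skewSum_single (μ : L ≃+* L) (a : L) : skewSum (single μ a) = mulL a * autEnd μ :=
  liftAddHom_apply_single _ _ _

@[simp] lemma skewSum_single_one (a : L) : skewSum (single 1 a) = mulL a := by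
  rw [skewSum_single, autEnd_one, mul_one]

lemma skewSum_apply (c : (L ≃+* L) →₀ L) (x : L) :
    skewSum c x = c.sum fun μ a => a * μ x := by
  rw [skewSum, liftAddHom_apply, Finsupp.sum, Finsupp.sum]
  exact AddMonoidHom.finsetSum_apply _ _ _

lemma skewSum_injective : Function.Injective (skewSum : ((L ≃+* L) →₀ L) →+ AddMonoid.End L) := by
  refine (injective_iff_map_eq_zero _).2 fun c hc => ?_
  have hind : LinearIndependent L fun μ : L ≃+* L => (μ : L → L) :=
    (linearIndependent_monoidHom L L).comp (fun μ : L ≃+* L => (μ : L →* L))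
      fun μ ν h => RingEquiv.ext fun x => DFunLike.congr_fun h x
  refine linearIndependent_iff.1 hind c (funext fun x => ?_)
  rw [linearCombination_apply, Finsupp.sum, Finset.sum_apply]
  simpa [skewSum_apply, Finsupp.sum] using DFunLike.congr_fun hc x

lemma mul_apply_eq_of_commute_mulL {c : (L ≃+* L) →₀ L} {γ : L}
    (h : skewSum c * mulL γ = mulL γ * skewSum c) (μ : L ≃+* L) : c μ * μ γ = γ * c μ := by
  let d := onFinset c.support (fun μ => c μ * μ γ) fun μ hμ =>
    mem_support_iff.2 (left_ne_zero_of_mul hμ)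
  have hd : skewSum d = skewSum (γ • c) := by
    ext x
    have hx := DFunLike.congr_fun h x
    simp only [AddMonoid.End.coe_mul, Function.comp_apply, mulL_apply, skewSum_apply] at hx
    rw [skewSum_apply, skewSum_apply, onFinset_sum _ fun _ => zero_mul _,
      sum_smul_index fun _ => zero_mul _]
    simpa [Finsupp.sum, Finset.mul_sum, mul_assoc] using hx
  simpa [d] using DFunLike.congr_fun (skewSum_injective hd) μ

lemma mulL_mul_autEnd_mul (a b : L) (μ ν : L ≃+* L) :
    mulL a * autEnd μ * (mulL b * autEnd ν) = mulL (a * μ b) * autEnd (μ * ν) :=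
  DFunLike.ext _ _ fun x => by simp [mul_assoc]

lemma skewSum_mul_skewSum (c d : (L ≃+* L) →₀ L) :
    skewSum c * skewSum d =
      skewSum (c.sum fun μ a => d.sum fun ν b => single (μ * ν) (a * μ b)) := by
  conv_lhs => rw [← c.sum_single, ← d.sum_single]
  simp only [map_finsuppSum, Finsupp.sum_mul, Finsupp.mul_sum, skewSum_single,
    mulL_mul_autEnd_mul]
  exact Finsupp.sum_comm _ _ _

def skewSubring (M : Submonoid (L ≃+* L)) : Subring (AddMonoid.End L) where
  __ := (supported L L (M : Set (L ≃+* L))).toAddSubgroup.map skewSum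
  one_mem' := ⟨single 1 1, single_mem_supported L 1 M.one_mem, by rw [skewSum_single_one, mulL_one]⟩
  mul_mem' := by
    rintro _ _ ⟨c, hc, rfl⟩ ⟨d, hd, rfl⟩
    refine ⟨_, ?_, (skewSum_mul_skewSum c d).symm⟩
    exact sum_mem fun μ hμ => sum_mem fun ν hν =>
      single_mem_supported L _ (M.mul_mem (hc hμ) (hd hν))

lemma GaloisSetting.skewL_le_skewSubring (S : GaloisSetting L) : S.skewL ≤ skewSubring S.M := by
  refine Subring.closure_le.2 (Set.union_subset ?_ ?_)
  · rintro _ ⟨l, rfl⟩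
    exact ⟨single 1 l, single_mem_supported L l S.M.one_mem, skewSum_single_one l⟩
  · rintro _ ⟨μ, hμ, rfl⟩
    exact ⟨single μ 1, single_mem_supported L 1 hμ, by rw [skewSum_single, mulL_one, one_mul]⟩

end SkewOperators

section FixedPoints

variable {L : Type*} [Field L]

lemma prod_apply_mem_fixedSubring (W : Subgroup (L ≃+* L)) [Fintype W] (b : L) :
    ∏ w : W, (w : L ≃+* L) b ∈ fixedSubring W := fun v hv => by
  rw [map_prod]
  exact Fintype.prod_equiv (Equiv.mulLeft ⟨v, hv⟩) _ _ fun w => rfl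

lemma mem_of_forall_fixedSubring_apply_eq {W : Subgroup (L ≃+* L)} [Finite W] {μ : L ≃+* L}
    (hμ : ∀ x ∈ fixedSubring W, μ x = x) : μ ∈ W := by
  let φ : L →ₐ[FixedPoints.subfield W L] L :=
    { (μ : L →+* L) with commutes' := fun x => hμ x fun w hw => x.2 ⟨w, hw⟩ }
  obtain ⟨w, hw⟩ := (FixedPoints.toAlgHom_bijective W L).surjective φ
  have : (w : L ≃+* L) = μ := RingEquiv.ext fun x => DFunLike.congr_fun hw x
  exact this ▸ w.2

end FixedPoints

namespace GaloisSetting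

variable {L : Type*} [Field L] (S : GaloisSetting L)

/-- Clear the denominator `b` of `x = a / b` by multiplying with its `W`-norm `∏_w w b ∈ Γ`. -/
lemma exists_mem_Γ_div {x : L} (hx : x ∈ fixedSubring S.W) :
    ∃ a ∈ S.Γ, ∃ b ∈ S.Γ, x = a / b := by
  classical
  have := S.finW
  cases nonempty_fintype S.W
  obtain ⟨a, b, hb, rfl⟩ := S.frac x
  have hΛ (s : Finset S.W) : ∏ w ∈ s, (w : L ≃+* L) b ∈ S.Λ :=
    prod_mem fun w _ => S.hW w w.2 b b.2
  have hn : ∏ w : S.W, (w : L ≃+* L) b ≠ 0 :=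
    Finset.prod_ne_zero_iff.2 fun w _ => by simpa using hb
  have hxn : (a : L) / b * ∏ w : S.W, (w : L ≃+* L) b =
      a * ∏ w ∈ (Finset.univ : Finset S.W).erase 1, (w : L ≃+* L) b := by
    rw [← Finset.mul_prod_erase _ _ (Finset.mem_univ 1), OneMemClass.coe_one,
      RingAut.one_apply, ← mul_assoc, div_mul_cancel₀ _ hb]
  refine ⟨_, ⟨?_, (fixedSubring S.W).mul_mem hx (prod_apply_mem_fixedSubring S.W b)⟩,
    _, ⟨hΛ _, prod_apply_mem_fixedSubring S.W b⟩, (mul_div_cancel_right₀ _ hn).symm⟩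
  rw [hxn]
  exact S.Λ.mul_mem a.2 (hΛ _)

lemma mem_W_of_forall_Γ_apply_eq {μ : L ≃+* L} (hμ : ∀ γ ∈ S.Γ, μ γ = γ) : μ ∈ S.W := by
  have := S.finW
  refine mem_of_forall_fixedSubring_apply_eq fun x hx => ?_
  obtain ⟨a, ha, b, hb, rfl⟩ := S.exists_mem_Γ_div hx
  rw [map_div₀, hμ a ha, hμ b hb]

end GaloisSetting

open GaloisSetting in
/-- Let `U` be a principal Galois `Γ`-order.  Then `Γ` is a maximal
commutative subalgebra of `U`: any `X ∈ U` commuting with every element of `Γ`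
(embedded in `U` as left-multiplication operators) lies in `Γ`. -/
theorem principalGaloisOrder_gamma_maximal_commutative {L : Type*} [Field L]
    (S : GaloisSetting L) (U : Subring (AddMonoid.End L))
    (hU : S.IsPrincipalGaloisOrder U) :
    ∀ X ∈ U, (∀ γ ∈ S.Γ, X * mulL γ = mulL γ * X) → ∃ γ ∈ S.Γ, X = mulL γ := by
  intro X hX hcomm
  obtain ⟨c, hcM, rfl⟩ := S.skewL_le_skewSubring (hU.subInvK X hX).1
  have hsupp : c.support ⊆ {1} := fun μ hμ => by
    have hfix : ∀ γ ∈ S.Γ, μ γ = γ := fun γ hγ => mul_left_cancel₀ (mem_support_iff.1 hμ) <| by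
      rw [mul_apply_eq_of_commute_mulL (hcomm γ hγ), mul_comm]
    exact Finset.mem_singleton.2 <| S.separating μ (hcM hμ) 1 S.M.one_mem <| by
      simpa using S.mem_W_of_forall_Γ_apply_eq hfix
  rw [support_subset_singleton.1 hsupp, skewSum_single_one] at hX ⊢
  exact ⟨c 1, by simpa using hU.princ _ hX 1 S.Γ.one_mem, rfl⟩
end
end

section
/- Let $U$ be a principal Galois $\Gamma$-order. Then every maximal ideal $\mathfrak{m}$ of $\Gamma$ satisfies $\mathfrak{m}U \neq U$; consequently $\mathfrak{m}$ is contained in a maximal right ideal of $U$. -/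
noncomputable section

open GaloisSetting in
/-- Let `U` be a principal Galois `Γ`-order.  Then for every maximal
ideal `𝔪` of `Γ`, the right ideal `𝔪 U` is proper (`1 ∉ 𝔪 U`); consequently `𝔪` is
contained in a maximal right ideal of `U`. -/
theorem principalGaloisOrder_maximal_ideal_proper {L : Type*} [Field L]
    (S : GaloisSetting L) (U : Subring (AddMonoid.End L))
    (hU : S.IsPrincipalGaloisOrder U) :
    ∀ 𝔪 : Ideal (S.Γ), 𝔪.IsMaximal →
      (1 : AddMonoid.End L) ∉
        AddSubgroup.closure {x | ∃ γ : S.Γ, γ ∈ 𝔪 ∧ ∃ u ∈ U, x = mulL (γ : L) * u} ∧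
      ∃ I : AddSubgroup (AddMonoid.End L), (I : Set (AddMonoid.End L)) ⊆ U ∧
        (∀ x ∈ I, ∀ u ∈ U, x * u ∈ I) ∧
        (∀ γ : S.Γ, γ ∈ 𝔪 → mulL (γ : L) ∈ I) ∧
        (1 : AddMonoid.End L) ∉ I ∧
        (∀ J : AddSubgroup (AddMonoid.End L), (J : Set (AddMonoid.End L)) ⊆ U →
          (∀ x ∈ J, ∀ u ∈ U, x * u ∈ J) → I ≤ J →
          (1 : AddMonoid.End L) ∉ J → J = I) := by
  
  intro 𝔪 hm
  -- evaluation at 1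
  have hone : (1 : L) ∈ S.Γ := one_mem _
  set gen : Set (AddMonoid.End L) :=
    {x | ∃ γ : S.Γ, γ ∈ 𝔪 ∧ ∃ u ∈ U, x = mulL (γ : L) * u} with hgen
  set I₀ : AddSubgroup (AddMonoid.End L) := AddSubgroup.closure gen with hI₀
  -- key: every member of I₀ evaluates at 1 into 𝔪
  have hkey : ∀ X ∈ I₀, ∃ g ∈ 𝔪, X (1 : L) = (g : L) := by
    intro X hX
    refine AddSubgroup.closure_induction ?_ ?_ ?_ ?_ hX
    · rintro x ⟨γ, hγ, u, hu, rfl⟩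
      have hu1 : u (1 : L) ∈ S.Γ := hU.princ u hu 1 hone
      refine ⟨γ * ⟨u 1, hu1⟩, Ideal.mul_mem_right _ _ hγ, ?_⟩
      show (γ : L) * u 1 = _
      simp
    · exact ⟨0, zero_mem _, by simp⟩
    · rintro x y - - ⟨g, hg, hx⟩ ⟨g', hg', hy⟩
      exact ⟨g + g', add_mem hg hg', by
        show x 1 + y 1 = _; rw [hx, hy]; simp⟩
    · rintro x - ⟨g, hg, hx⟩
      exact ⟨-g, neg_mem hg, by show -(x 1) = _; rw [hx]; simp⟩
  have hone_not : (1 : AddMonoid.End L) ∉ I₀ := by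
    intro h1
    obtain ⟨g, hg, hg1⟩ := hkey 1 h1
    have : (1 : L) = (g : L) := hg1
    have hg1' : g = (1 : S.Γ) := Subtype.ext this.symm
    exact hm.ne_top ((Ideal.eq_top_iff_one _).2 (hg1' ▸ hg))
  refine ⟨hone_not, ?_⟩
  -- I₀ basics
  have hI₀sub : (I₀ : Set (AddMonoid.End L)) ⊆ U := by
    rw [hI₀]
    refine (AddSubgroup.closure_le U.toAddSubgroup).2 ?_
    rintro x ⟨γ, hγ, u, hu, rfl⟩
    exact U.mul_mem (hU.gammaSub γ γ.2) hu
  have hI₀mul : ∀ x ∈ I₀, ∀ u ∈ U, x * u ∈ I₀ := by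
    intro x hx u hu
    refine AddSubgroup.closure_induction ?_ ?_ ?_ ?_ hx
    · rintro y ⟨γ, hγ, u', hu', rfl⟩
      exact AddSubgroup.subset_closure ⟨γ, hγ, u' * u, mul_mem hu' hu, (mul_assoc (mulL (γ : L)) u' u).symm⟩
    · simpa using zero_mem I₀
    · rintro a b - - ha hb
      simpa [add_mul] using add_mem ha hb
    · rintro a - ha
      show -(a * u) ∈ I₀
      exact neg_mem ha
  have hI₀ml : ∀ γ : S.Γ, γ ∈ 𝔪 → mulL (γ : L) ∈ I₀ := by
    intro γ hγ
    exact AddSubgroup.subset_closure ⟨γ, hγ, 1, one_mem _, (mul_one _).symm⟩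
  -- Zorn
  set s : Set (AddSubgroup (AddMonoid.End L)) :=
    {J | (J : Set (AddMonoid.End L)) ⊆ U ∧ (∀ x ∈ J, ∀ u ∈ U, x * u ∈ J) ∧
      (1 : AddMonoid.End L) ∉ J} with hs
  have hI₀s : I₀ ∈ s := ⟨hI₀sub, hI₀mul, hone_not⟩
  have hchain : ∀ c ⊆ s, IsChain (· ≤ ·) c → ∀ y ∈ c, ∃ ub ∈ s, ∀ z ∈ c, z ≤ ub := by
    intro c hcs hc y hy
    have hne : c.Nonempty := ⟨y, hy⟩
    have hdir : DirectedOn (· ≤ ·) c := hc.directedOn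
    refine ⟨sSup c, ⟨?_, ?_, ?_⟩, fun z hz => le_sSup hz⟩
    · intro x hx
      obtain ⟨J, hJ, hxJ⟩ := (AddSubgroup.mem_sSup_of_directedOn hne hdir).1 hx
      exact (hcs hJ).1 hxJ
    · intro x hx u hu
      obtain ⟨J, hJ, hxJ⟩ := (AddSubgroup.mem_sSup_of_directedOn hne hdir).1 hx
      exact (AddSubgroup.mem_sSup_of_directedOn hne hdir).2
        ⟨J, hJ, (hcs hJ).2.1 x hxJ u hu⟩
    · intro h1
      obtain ⟨J, hJ, hxJ⟩ := (AddSubgroup.mem_sSup_of_directedOn hne hdir).1 h1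
      exact (hcs hJ).2.2 hxJ
  obtain ⟨m, hI₀m, hmax⟩ := zorn_le_nonempty₀ s hchain I₀ hI₀s
  have hms := hmax.prop
  refine ⟨m, hms.1, hms.2.1, fun γ hγ => hI₀m (hI₀ml γ hγ), hms.2.2, ?_⟩
  intro J hJsub hJmul hmJ hJ1
  exact hmax.eq_of_ge ⟨hJsub, hJmul, hJ1⟩ hmJ
end
end

section
/- Let $D$ be a ring, $\sigma$ an automorphism of $D$, and $a$ a nonzero central element of $D$; consider the degree 1 generalized Weyl algebra $D(a,\sigma)$ generated over $D$ by $X^+, X^-$ with relations $X^+ d = \sigma(d)X^+$, $X^- d = \sigma^{-1}(d)X^-$, $X^-X^+ = a$, $X^+X^- = \sigma(a)$. If $a$ is regular in $D$ and $S$ is the multiplicatively closed subset of $D$ generated by all $\sigma^m(a)$, $m \in \mathbb{Z}$, then $S$ consists of regular elements of $D(a,\sigma)$: no element of $S$ annihilates a nonzero element of $D(a,\sigma)$. -/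
/-- Data of a degree 1 generalized Weyl algebra `T = D(a,σ)`: a base ring `D` embedded
in `T`, an automorphism `σ` of `D`, a nonzero central element `a`, and generators
`X⁺, X⁻` satisfying the defining relations. -/
structure GWA1 (D T : Type*) [Ring D] [Ring T] where
  σ : RingAut D
  a : D
  ha : a ≠ 0
  central : ∀ d : D, a * d = d * a
  ι : D →+* T
  hι : Function.Injective ι
  Xp : T
  Xm : T
  relp : ∀ d : D, Xp * ι d = ι (σ d) * Xp
  relm : ∀ d : D, Xm * ι d = ι (σ⁻¹ d) * Xm
  mm : Xm * Xp = ι a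
  pp : Xp * Xm = ι (σ a)

namespace GWA1

variable {D T : Type*} [Ring D] [Ring T] (G : GWA1 D T)

/-- `Xⁿ`: the power `(X⁺)ⁿ` for `n ≥ 0` and `(X⁻)⁻ⁿ` for `n < 0`. -/
def pow (n : ℤ) : T := if 0 ≤ n then G.Xp ^ n.toNat else G.Xm ^ (-n).toNat

/-- `T` is ℤ-graded with components `D Xⁿ` and is free as a left `D`-module on the
`Xⁿ`: every element of `T` is uniquely a finite sum `Σ ι(dₙ) Xⁿ`. -/
def Free : Prop := ∀ t : T, ∃! c : ℤ →₀ D, t = c.sum fun n d => G.ι d * G.pow n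

lemma xp_pow_mul_ι (k : ℕ) (d : D) :
    G.Xp ^ k * G.ι d = G.ι ((G.σ ^ k) d) * G.Xp ^ k := by
  induction k generalizing d with
  | zero => simp
  | succ k ih =>
    rw [pow_succ, mul_assoc, G.relp, ← mul_assoc, ih (G.σ d), mul_assoc, ← pow_succ]
    congr 2

lemma xm_pow_mul_ι (k : ℕ) (d : D) :
    G.Xm ^ k * G.ι d = G.ι ((G.σ⁻¹ ^ k) d) * G.Xm ^ k := by
  induction k generalizing d with
  | zero => simp
  | succ k ih =>
    rw [pow_succ, mul_assoc, G.relm, ← mul_assoc, ih (G.σ⁻¹ d), mul_assoc, ← pow_succ]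
    congr 2

lemma pow_mul_ι (n : ℤ) (d : D) :
    G.pow n * G.ι d = G.ι ((G.σ ^ n) d) * G.pow n := by
  unfold pow
  split_ifs with h
  · rw [xp_pow_mul_ι]
    congr 3
    rw [← zpow_natCast, Int.toNat_of_nonneg h]
  · rw [xm_pow_mul_ι]
    congr 3
    rw [← zpow_natCast, Int.toNat_of_nonneg (by omega : (0:ℤ) ≤ -n), zpow_neg, inv_zpow, inv_inv]

end GWA1

section RegAux

variable {D : Type*} [Ring D]

/-- Regular element of `D`. -/
def DReg (s : D) : Prop := (∀ d : D, s * d = 0 → d = 0) ∧ (∀ d : D, d * s = 0 → d = 0)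

lemma DReg.map {s : D} (hs : DReg s) (e : RingAut D) : DReg (e s) := by
  constructor
  · intro d h
    have h2 : e (s * e⁻¹ d) = e 0 := by
      rw [map_mul, map_zero]
      rw [show e (e⁻¹ d) = d from e.apply_symm_apply d]
      exact h
    have h3 := hs.1 _ (e.injective h2)
    have := congrArg e h3
    rw [map_zero] at this
    rw [show e (e⁻¹ d) = d from e.apply_symm_apply d] at this
    exact this
  · intro d h
    have h2 : e (e⁻¹ d * s) = e 0 := by
      rw [map_mul, map_zero]
      rw [show e (e⁻¹ d) = d from e.apply_symm_apply d]
      exact h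
    have h3 := hs.2 _ (e.injective h2)
    have := congrArg e h3
    rw [map_zero] at this
    rw [show e (e⁻¹ d) = d from e.apply_symm_apply d] at this
    exact this

lemma DReg.mul {s s' : D} (hs : DReg s) (hs' : DReg s') : DReg (s * s') := by
  constructor
  · intro d h
    rw [mul_assoc] at h
    exact hs'.1 d (hs.1 _ h)
  · intro d h
    rw [← mul_assoc] at h
    exact hs.2 d (hs'.2 _ h)

lemma DReg.one : DReg (1 : D) :=
  ⟨fun d h => by simpa using h, fun d h => by simpa using h⟩

end RegAux

/-- Let `T = D(a,σ)` be a degree 1 generalized Weyl algebra with `a`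
regular in `D`, and let `S` be the multiplicative set of `D` generated by the elements
`σᵐ(a)`, `m ∈ ℤ`.  Then `S` consists of regular elements of `T`: no element of `S`
annihilates a nonzero element of `T` on either side. -/
theorem gwa_sigma_orbit_regular {D T : Type*} [Ring D] [Ring T] (G : GWA1 D T)
    (hfree : G.Free)
    (hreg : (∀ d : D, G.a * d = 0 → d = 0) ∧ ∀ d : D, d * G.a = 0 → d = 0) :
    ∀ s ∈ Submonoid.closure {d : D | ∃ m : ℤ, d = (G.σ ^ m) G.a},
      ∀ t : T, (G.ι s * t = 0 → t = 0) ∧ (t * G.ι s = 0 → t = 0) := by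
  intro s hs t
  -- s is regular in D
  have hsreg : DReg s := by
    refine Submonoid.closure_induction (fun x hx => ?_) DReg.one
      (fun x y _ _ hx hy => hx.mul hy) hs
    obtain ⟨m, rfl⟩ := hx
    exact DReg.map ⟨hreg.1, hreg.2⟩ (G.σ ^ m)
  -- the unique representation of t
  obtain ⟨c, hc, -⟩ := hfree t
  -- uniqueness of the representation of 0
  obtain ⟨c₀, hc₀, hu₀⟩ := hfree (0 : T)
  have hzero : ∀ c' : ℤ →₀ D, (0 : T) = c'.sum (fun n d => G.ι d * G.pow n) → c' = 0 := by
    intro c' h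
    rw [hu₀ c' h, hu₀ 0 (by simp)]
  constructor
  · intro h
    set f : ℤ → D := fun n => s * c n with hf
    have hsupp : ∀ n, f n ≠ 0 → n ∈ c.support := by
      intro n hn
      simp only [Finsupp.mem_support_iff]
      intro hcn
      exact hn (by simp [hf, hcn])
    set c' : ℤ →₀ D := Finsupp.onFinset c.support f hsupp with hc'
    have hrep : (0 : T) = c'.sum (fun n d => G.ι d * G.pow n) := by
      rw [← h, hc, Finsupp.mul_sum]
      rw [Finsupp.sum_of_support_subset c' (Finsupp.support_onFinset_subset)
        _ (fun i _ => by simp)]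
      rw [Finsupp.sum]
      refine Finset.sum_congr rfl fun n _ => ?_
      simp only [hc', Finsupp.onFinset_apply, hf, map_mul, mul_assoc]
    have := hzero c' hrep
    have hcz : c = 0 := by
      ext n
      have : c' n = 0 := by rw [this]; rfl
      simpa [hc', hf] using hsreg.1 (c n) (by simpa [hc', hf] using this)
    rw [hc, hcz]
    simp
  · intro h
    set f : ℤ → D := fun n => c n * (G.σ ^ n) s with hf
    have hsupp : ∀ n, f n ≠ 0 → n ∈ c.support := by
      intro n hn
      simp only [Finsupp.mem_support_iff]
      intro hcn
      exact hn (by simp [hf, hcn])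
    set c' : ℤ →₀ D := Finsupp.onFinset c.support f hsupp with hc'
    have hrep : (0 : T) = c'.sum (fun n d => G.ι d * G.pow n) := by
      rw [← h, hc, Finsupp.sum_mul]
      rw [Finsupp.sum_of_support_subset c' (Finsupp.support_onFinset_subset)
        _ (fun i _ => by simp)]
      rw [Finsupp.sum]
      refine Finset.sum_congr rfl fun n _ => ?_
      simp only [hc', Finsupp.onFinset_apply, hf, map_mul]
      rw [mul_assoc, GWA1.pow_mul_ι, ← mul_assoc]
    have := hzero c' hrep
    have hcz : c = 0 := by
      ext n
      have hn0 : c' n = 0 := by rw [this]; rfl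
      have : c n * (G.σ ^ n) s = 0 := by simpa [hc', hf] using hn0
      exact (hsreg.map (G.σ ^ n)).2 (c n) this
    rw [hc, hcz]
    simp
end

section
/- The Laurent polynomial ring $\mathsf{k}[h_1^{\pm 1}, \ldots, h_n^{\pm 1}]$ is a free module of rank $n!$ over its subring of symmetric elements $\mathsf{k}[h_1^{\pm 1}, \ldots, h_n^{\pm 1}]^{S_n}$, where the symmetric group $S_n$ acts by permuting the variables. -/
/-- The permutation `σ` acting on exponent vectors of Laurent monomials. -/
def permAdd {n : ℕ} (σ : Equiv.Perm (Fin n)) : (Fin n → ℤ) ≃+ (Fin n → ℤ) where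
  toFun f := f ∘ σ.symm
  invFun f := f ∘ σ
  left_inv f := by ext i; simp
  right_inv f := by ext i; simp
  map_add' f g := rfl

/-- The action of the permutation `σ ∈ Sₙ` on the Laurent polynomial ring
`k[h₁^{±1},…,hₙ^{±1}] = k[ℤⁿ]`, permuting the variables. -/
noncomputable def permAlg (k : Type*) [CommRing k] {n : ℕ} (σ : Equiv.Perm (Fin n)) :
    AddMonoidAlgebra k (Fin n → ℤ) ≃ₐ[k] AddMonoidAlgebra k (Fin n → ℤ) :=
  AddMonoidAlgebra.domCongr k k (permAdd σ)

/-- The subalgebra of symmetric Laurent polynomials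
`k[h₁^{±1},…,hₙ^{±1}]^{Sₙ}`. -/
noncomputable def symLaurent (k : Type*) [CommRing k] (n : ℕ) :
    Subalgebra k (AddMonoidAlgebra k (Fin n → ℤ)) where
  carrier := {p | ∀ σ : Equiv.Perm (Fin n), permAlg k σ p = p}
  mul_mem' := by
    intro a b ha hb σ
    rw [map_mul, ha σ, hb σ]
  add_mem' := by
    intro a b ha hb σ
    rw [map_add, ha σ, hb σ]
  algebraMap_mem' := by
    intro c σ
    simpa using (permAlg k σ).commutes c

/-!
The descent monomials `x^{c_σ}` of Garsia and Stanton form a basis. Every exponent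
`ν ∈ ℤⁿ` is uniquely `μ ∘ σ⁻¹ + c_σ` with `μ` weakly increasing: `σ` is the stable sorting
permutation of `ν` and `c_σ` puts on the variable `h_{σ i}` the number of descents of `σ` before
position `i`. The product of the orbit sum `m_μ` with `x^{c_σ}` is `x^ν` plus monomials of
strictly smaller weight (sum of squares of the exponents, then their positional moment), as one
sees by bubble-sorting the rearrangements of `μ`. This unitriangularity gives linear independence
(look at a leading term of maximal weight) and spanning (well-founded induction on the weight,
whose lower sets are finite).
-/

theorem Fintype.sum_sub_sum_of_eq_off_pair {ι M : Type*} [Fintype ι] [AddCommGroup M]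
    {f g : ι → M} {a b : ι} (hab : a ≠ b) (h : ∀ x, x ≠ a → x ≠ b → f x = g x) :
    ∑ x, f x - ∑ x, g x = (f a - g a) + (f b - g b) := by
  rw [← Finset.sum_sub_distrib]
  exact Fintype.sum_eq_add a b hab fun x hx => sub_eq_zero.2 (h x hx.1 hx.2)

theorem Fin.monotone_iff_adj {n : ℕ} {α : Type*} [Preorder α] {f : Fin n → α} :
    Monotone f ↔ ∀ i j : Fin n, (j : ℕ) = i + 1 → f i ≤ f j := by
  refine ⟨fun hf i j hij => hf (Fin.le_def.2 (by omega)), fun h => ?_⟩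
  cases n with
  | zero => exact fun a => a.elim0
  | succ m => exact Fin.monotone_iff_le_succ.2 fun i => h _ _ (by simp)

namespace SymmetricLaurent

open Equiv Finset

variable {n : ℕ}

section Descents

def descentCount (σ : Perm (Fin n)) : ℕ → ℕ
  | 0 => 0
  | i + 1 => descentCount σ i +
      if h : i + 1 < n then (if σ ⟨i + 1, h⟩ < σ ⟨i, by omega⟩ then 1 else 0) else 0

variable {σ : Perm (Fin n)}

theorem descentCount_monotone : Monotone (descentCount σ) :=
  monotone_nat_of_le_succ fun i => by simp only [descentCount]; split_ifs <;> omega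

theorem descentCount_of_adj {i j : Fin n} (hij : (j : ℕ) = i + 1) :
    descentCount σ j = descentCount σ i + if σ j < σ i then 1 else 0 := by
  obtain ⟨j, hj⟩ := j
  obtain rfl : j = i + 1 := hij
  simp [descentCount, hj]

theorem descentCount_of_adj_of_lt {i j : Fin n} (hij : (j : ℕ) = i + 1) (h : σ i < σ j) :
    descentCount σ j = descentCount σ i := by
  simp [descentCount_of_adj hij, h.not_gt]

theorem apply_lt_apply_of_adj {i j : Fin n} (hij : (j : ℕ) = i + 1)
    (h : descentCount σ j = descentCount σ i) : σ i < σ j := by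
  have hne : σ i ≠ σ j := σ.injective.ne (Fin.ne_of_val_ne (by omega))
  rw [descentCount_of_adj hij] at h
  exact lt_of_le_of_ne (not_lt.1 fun hlt => by simp [hlt] at h) hne

theorem apply_lt_apply_of_descentCount_eq {a b : Fin n} (hab : a < b)
    (h : descentCount σ (a : ℕ) = descentCount σ (b : ℕ)) : σ a < σ b := by
  obtain ⟨b, hb⟩ := b
  rw [Fin.lt_def] at hab
  simp only at hab h
  induction b with
  | zero => omega
  | succ b ih =>
    have hc : b < n := by omega
    have hab : descentCount σ a ≤ descentCount σ b := descentCount_monotone (by omega)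
    have hbc : descentCount σ b ≤ descentCount σ (b + 1) := descentCount_monotone b.le_succ
    have hadj : σ ⟨b, hc⟩ < σ ⟨b + 1, hb⟩ := apply_lt_apply_of_adj rfl (by simp only; omega)
    rcases eq_or_ne (a : ℕ) b with hab' | hab'
    · rwa [show a = ⟨b, hc⟩ from Fin.ext hab']
    · exact (ih hc (by omega) (by omega)).trans hadj

end Descents

section Garsia

def descentExp (σ : Perm (Fin n)) : Fin n → ℤ := fun p => descentCount σ (σ.symm p)

def garsia (σ : Perm (Fin n)) (u : Fin n → ℤ) : Fin n → ℤ := u ∘ σ.symm + descentExp σ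

variable {σ : Perm (Fin n)}

@[simp]
theorem garsia_apply_apply (u : Fin n → ℤ) (i : Fin n) :
    garsia σ u (σ i) = u i + descentCount σ i := by
  simp [garsia, descentExp]

theorem exists_garsia_eq (ν : Fin n → ℤ) : ∃ σ μ, Monotone μ ∧ garsia σ μ = ν := by
  set σ := Tuple.sort ν
  obtain ⟨hmono, hties⟩ := Tuple.eq_sort_iff.1 (rfl : σ = Tuple.sort ν)
  refine ⟨σ, fun i => ν (σ i) - descentCount σ i,
    Fin.monotone_iff_adj.2 fun i j hij => ?_, ?_⟩
  · have hle : ν (σ i) ≤ ν (σ j) := hmono (Fin.le_def.2 (by omega))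
    rcases lt_or_gt_of_ne (σ.injective.ne (Fin.ne_of_val_ne (by omega) : i ≠ j)) with h | h
    · rw [descentCount_of_adj_of_lt hij h]
      omega
    · have hlt : ν (σ i) < ν (σ j) :=
        lt_of_le_of_ne hle fun he => (hties i j (Fin.lt_def.2 (by omega)) he).not_gt h
      rw [descentCount_of_adj hij, if_pos h]
      push_cast
      omega
  · ext p
    simp [garsia, descentExp]

theorem sort_garsia {μ : Fin n → ℤ} (hμ : Monotone μ) : Tuple.sort (garsia σ μ) = σ := by
  have hd : Monotone fun i : Fin n => ((descentCount σ (i : ℕ) : ℕ) : ℤ) :=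
    fun a b hab => by dsimp only; exact_mod_cast descentCount_monotone (Fin.le_def.1 hab)
  refine (Tuple.eq_sort_iff.2 ⟨?_, fun a b hab he => ?_⟩).symm
  · have : garsia σ μ ∘ σ = μ + fun i : Fin n => ((descentCount σ (i : ℕ) : ℕ) : ℤ) := by
      ext
      simp
    rw [this]
    exact hμ.add hd
  · simp only [garsia_apply_apply] at he
    have := hμ hab.le
    have := descentCount_monotone (σ := σ) (Fin.le_def.1 hab.le)
    exact apply_lt_apply_of_descentCount_eq hab (by omega)

def moment (ν : Fin n → ℤ) : ℤ := ∑ p : Fin n, ((p : ℕ) : ℤ) * ν p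

/-- Swapping an adjacent inversion of `u` spreads two entries of `garsia σ u` apart, raising the
sum of squares, unless the two positions have the same descent count; then it only moves the
larger entry to a later position, raising the moment. -/
def weight (ν : Fin n → ℤ) : ℤ ×ₗ ℤ := toLex (∑ p, ν p ^ 2, moment ν)

theorem moment_comp_perm_le {μ : Fin n → ℤ} (hμ : Monotone μ) (ρ : Perm (Fin n)) :
    moment (μ ∘ ρ) ≤ moment μ := by
  have hf : Monotone fun p : Fin n => ((p : ℕ) : ℤ) := fun a b hab => by simpa using hab
  simpa [moment] using (hf.monovary hμ).sum_smul_comp_perm_le_sum_smul (σ := ρ)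

theorem moment_comp_swap_sub (u : Fin n → ℤ) {i j : Fin n} (hij : (j : ℕ) = i + 1) :
    moment (u ∘ swap i j) - moment u = u i - u j := by
  rw [moment, moment, Fintype.sum_sub_sum_of_eq_off_pair (a := i) (b := j)
    (Fin.ne_of_val_ne (by omega)) fun x hi hj => by simp [swap_apply_of_ne_of_ne hi hj]]
  simp only [Function.comp_apply, swap_apply_left, swap_apply_right]
  have : ((j : ℕ) : ℤ) = (i : ℕ) + 1 := by exact_mod_cast hij
  rw [this]
  ring

theorem weight_garsia_lt_swap {u : Fin n → ℤ} {i j : Fin n} (hij : (j : ℕ) = i + 1)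
    (hu : u j < u i) : weight (garsia σ u) < weight (garsia σ (u ∘ swap i j)) := by
  have hσ : σ i ≠ σ j := σ.injective.ne (Fin.ne_of_val_ne (by omega))
  have hoff : ∀ p, p ≠ σ i → p ≠ σ j → garsia σ (u ∘ swap i j) p = garsia σ u p := by
    intro p hi hj
    obtain ⟨q, rfl⟩ := σ.surjective p
    simp [swap_apply_of_ne_of_ne (σ.injective.ne_iff.1 hi) (σ.injective.ne_iff.1 hj)]
  have hsq := Fintype.sum_sub_sum_of_eq_off_pair hσ
    (f := fun p => garsia σ (u ∘ swap i j) p ^ 2) (g := fun p => garsia σ u p ^ 2)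
    fun p hi hj => by rw [hoff p hi hj]
  have hmom := Fintype.sum_sub_sum_of_eq_off_pair hσ
    (f := fun p : Fin n => ((p : ℕ) : ℤ) * garsia σ (u ∘ swap i j) p)
    (g := fun p : Fin n => ((p : ℕ) : ℤ) * garsia σ u p) fun p hi hj => by rw [hoff p hi hj]
  simp only [garsia_apply_apply, Function.comp_apply, swap_apply_left, swap_apply_right]
    at hsq hmom
  rw [weight, weight, moment, moment, Prod.Lex.toLex_lt_toLex]
  rcases (descentCount_monotone (σ := σ) (show (i : ℕ) ≤ j by omega)).lt_or_eq with hd | hd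
  · left
    have : (descentCount σ i : ℤ) < descentCount σ j := by exact_mod_cast hd
    nlinarith
  · right
    have : ((σ i : ℕ) : ℤ) < (σ j : ℕ) := by exact_mod_cast apply_lt_apply_of_adj hij hd.symm
    rw [hd] at hsq hmom
    constructor <;> nlinarith

theorem weight_garsia_comp_lt {μ : Fin n → ℤ} (hμ : Monotone μ) (ρ : Perm (Fin n))
    (hne : μ ∘ ρ ≠ μ) : weight (garsia σ (μ ∘ ρ)) < weight (garsia σ μ) := by
  induction hN : (moment μ - moment (μ ∘ ρ)).toNat using Nat.strong_induction_on
    generalizing ρ with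
  | _ N ih =>
  -- bubble sort: each swap of an adjacent inversion raises the moment of `μ ∘ ρ`, which never
  -- exceeds that of `μ` by the rearrangement inequality
  have hρ : ¬ Monotone (μ ∘ ρ) := fun h =>
    hne (by simpa using Tuple.unique_monotone h (τ := 1) (by simpa using hμ))
  obtain ⟨i, j, hij, hlt⟩ : ∃ i j : Fin n, (j : ℕ) = i + 1 ∧ μ (ρ j) < μ (ρ i) := by
    simpa [Fin.monotone_iff_adj] using hρ
  have hstep : weight (garsia σ (μ ∘ ρ)) < weight (garsia σ (μ ∘ ⇑(ρ * swap i j))) :=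
    weight_garsia_lt_swap hij hlt
  by_cases h : μ ∘ ⇑(ρ * swap i j) = μ
  · rwa [h] at hstep
  · refine hstep.trans (ih _ ?_ _ h rfl)
    have hswap := moment_comp_swap_sub (μ ∘ ρ) hij
    have hle := moment_comp_perm_le hμ (ρ * swap i j)
    rw [Perm.coe_mul, ← Function.comp_assoc] at hle ⊢
    simp only [Function.comp_apply] at hswap
    omega

def permOrbit (μ : Fin n → ℤ) : Finset (Fin n → ℤ) :=
  univ.image fun ρ : Perm (Fin n) => μ ∘ ρ

theorem mem_permOrbit {μ w : Fin n → ℤ} : w ∈ permOrbit μ ↔ ∃ ρ : Perm (Fin n), μ ∘ ρ = w := by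
  simp [permOrbit]

theorem comp_perm_mem_permOrbit {μ w : Fin n → ℤ} (hw : w ∈ permOrbit μ) (ρ : Perm (Fin n)) :
    w ∘ ρ ∈ permOrbit μ := by
  obtain ⟨τ, rfl⟩ := mem_permOrbit.1 hw
  exact mem_permOrbit.2 ⟨τ * ρ, rfl⟩

theorem weight_add_descentExp_lt {μ w : Fin n → ℤ} (hμ : Monotone μ) (hw : w ∈ permOrbit μ)
    (σ : Perm (Fin n)) (hne : w + descentExp σ ≠ garsia σ μ) :
    weight (w + descentExp σ) < weight (garsia σ μ) := by
  obtain ⟨ρ, rfl⟩ := mem_permOrbit.1 hw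
  have hρ : μ ∘ ρ = garsia σ (μ ∘ ⇑(ρ * σ)) - descentExp σ := by ext; simp [garsia]
  rw [hρ, sub_add_cancel] at hne ⊢
  exact weight_garsia_comp_lt hμ _ fun h => hne (by rw [h])

theorem finite_setOf_weight_lt (ν : Fin n → ℤ) :
    {g : Fin n → ℤ | weight g < weight ν}.Finite := by
  set B := ∑ p, ν p ^ 2
  refine (Set.finite_Icc (fun _ => -B) fun _ => B).subset fun g hg => ?_
  have hsq : ∑ p, g p ^ 2 ≤ B := by
    rcases Prod.Lex.toLex_lt_toLex.1 hg with h | h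
    exacts [h.le, h.1.le]
  have := fun p => (Finset.single_le_sum (fun q _ => sq_nonneg (g q)) (mem_univ p)).trans hsq
  refine ⟨fun p => ?_, fun p => ?_⟩ <;> dsimp only
  · linarith [this p, Int.le_self_sq (-g p), neg_sq (g p)]
  · linarith [this p, Int.le_self_sq (g p)]

theorem wellFounded_weight_lt : WellFounded fun g ν : Fin n → ℤ => weight g < weight ν :=
  Subrelation.wf
    (fun {g ν} h => Set.ncard_lt_ncard ((Set.ssubset_iff_of_subset fun _ hx => lt_trans hx h).2
      ⟨g, h, lt_irrefl (weight g)⟩) (finite_setOf_weight_lt ν))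
    (measure fun ν : Fin n → ℤ => {g | weight g < weight ν}.ncard).wf

end Garsia

section Algebra

open AddMonoidAlgebra

variable {k : Type*} [CommRing k]

theorem coeff_comp_perm_of_mem_symLaurent {p : k[Fin n → ℤ]} (hp : p ∈ symLaurent k n)
    (ρ : Perm (Fin n)) (a : Fin n → ℤ) : p.coeff (a ∘ ρ) = p.coeff a := by
  conv_rhs => rw [← hp ρ]
  simp only [permAlg, coeff_domCongr]
  rfl

variable (k) in
noncomputable def orbitSum (μ : Fin n → ℤ) : k[Fin n → ℤ] := ∑ w ∈ permOrbit μ, single w 1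

theorem orbitSum_mem_symLaurent (μ : Fin n → ℤ) : orbitSum k μ ∈ symLaurent k n := by
  intro ρ
  simp only [orbitSum, map_sum, permAlg, domCongr_single]
  refine Finset.sum_equiv (permAdd ρ) (fun w => ⟨fun hw => comp_perm_mem_permOrbit hw _,
    fun hw => by simpa [permAdd, Function.comp_assoc] using comp_perm_mem_permOrbit hw ρ⟩)
    fun _ _ => rfl

variable (k) in
noncomputable def descentMonomial (σ : Perm (Fin n)) : k[Fin n → ℤ] := single (descentExp σ) 1

theorem orbitSum_mul_descentMonomial (μ : Fin n → ℤ) (σ : Perm (Fin n)) :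
    orbitSum k μ * descentMonomial k σ = ∑ w ∈ permOrbit μ, single (w + descentExp σ) 1 := by
  simp [orbitSum, descentMonomial, Finset.sum_mul, single_mul_single]

theorem coeff_sum_smul_descentMonomial (g : Perm (Fin n) → symLaurent k n) (ν : Fin n → ℤ) :
    (∑ σ, g σ • descentMonomial k σ).coeff ν =
      ∑ σ, (g σ : k[Fin n → ℤ]).coeff (ν - descentExp σ) := by
  simp [coeff_sum, Subalgebra.smul_def, descentMonomial, sub_eq_add_neg]

theorem sort_eq_of_weight_le {p : k[Fin n → ℤ]} (hp : p ∈ symLaurent k n) {σ : Perm (Fin n)}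
    {ν : Fin n → ℤ} (hν : p.coeff (ν - descentExp σ) ≠ 0)
    (hmax : ∀ w, p.coeff w ≠ 0 → weight (w + descentExp σ) ≤ weight ν) :
    Tuple.sort ν = σ := by
  set w := ν - descentExp σ
  set μ := w ∘ Tuple.sort w
  have hμ : Monotone μ := Tuple.monotone_sort w
  have hleading : weight (garsia σ μ) ≤ weight ν := by
    refine hmax _ ?_
    change p.coeff ((w ∘ Tuple.sort w) ∘ σ.symm) ≠ 0
    rwa [coeff_comp_perm_of_mem_symLaurent hp, coeff_comp_perm_of_mem_symLaurent hp]
  have hw : w ∈ permOrbit μ := mem_permOrbit.2 ⟨(Tuple.sort w)⁻¹, by ext; simp [μ]⟩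
  have hν : w + descentExp σ = garsia σ μ := by
    by_contra h
    exact (weight_add_descentExp_lt hμ hw σ h).not_ge (by simpa [w] using hleading)
  rw [← sort_garsia (σ := σ) hμ, ← hν, sub_add_cancel]

theorem linearIndependent_descentMonomial :
    LinearIndependent (symLaurent k n) (descentMonomial k : Perm (Fin n) → k[Fin n → ℤ]) := by
  rw [Fintype.linearIndependent_iff]
  intro g hg
  by_contra! hne
  obtain ⟨σ₀, hσ₀⟩ := hne
  set S : Finset (Fin n → ℤ) := univ.biUnion fun σ =>
    (g σ : k[Fin n → ℤ]).coeff.support.image (· + descentExp σ)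
  have hmemS : ∀ σ w, (g σ : k[Fin n → ℤ]).coeff w ≠ 0 → w + descentExp σ ∈ S := fun σ w hw =>
    mem_biUnion.2 ⟨σ, mem_univ _, mem_image_of_mem _ (Finsupp.mem_support_iff.2 hw)⟩
  obtain ⟨w₀, hw₀⟩ := Finsupp.ne_iff.1 (by simpa using hσ₀ : (g σ₀ : k[Fin n → ℤ]).coeff ≠ 0)
  obtain ⟨ν, hνS, hmax⟩ := S.exists_max_image weight ⟨_, hmemS σ₀ w₀ hw₀⟩
  have hlead : ∀ σ, (g σ : k[Fin n → ℤ]).coeff (ν - descentExp σ) ≠ 0 → σ = Tuple.sort ν :=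
    fun σ hσ => (sort_eq_of_weight_le (g σ).2 hσ fun w hw => hmax _ (hmemS σ w hw)).symm
  have hcoeff := congrArg (fun x : k[Fin n → ℤ] => x.coeff ν) hg
  simp only [coeff_sum_smul_descentMonomial, coeff_zero, Finsupp.coe_zero, Pi.zero_apply]
    at hcoeff
  rw [Finset.sum_eq_single (Tuple.sort ν) (fun σ _ h => by_contra fun h' => h (hlead σ h'))
    (by simp)] at hcoeff
  obtain ⟨σ₁, -, hσ₁⟩ := mem_biUnion.1 hνS
  obtain ⟨w₁, hw₁, rfl⟩ := mem_image.1 hσ₁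
  have h₁ : (g σ₁ : k[Fin n → ℤ]).coeff (w₁ + descentExp σ₁ - descentExp σ₁) ≠ 0 := by
    simpa using Finsupp.mem_support_iff.1 hw₁
  rw [← hlead σ₁ h₁] at hcoeff
  exact h₁ hcoeff

theorem span_descentMonomial : ⊤ ≤ Submodule.span (symLaurent k n)
    (Set.range (descentMonomial k : Perm (Fin n) → k[Fin n → ℤ])) := by
  set V := Submodule.span (symLaurent k n)
    (Set.range (descentMonomial k : Perm (Fin n) → k[Fin n → ℤ]))
  have hsingle : ∀ ν, (single ν 1 : k[Fin n → ℤ]) ∈ V := fun ν =>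
    wellFounded_weight_lt.induction (C := fun ν => single ν 1 ∈ V) ν fun ν ih => by
      obtain ⟨σ, μ, hμ, rfl⟩ := exists_garsia_eq ν
      have hσ : μ ∘ σ.symm ∈ permOrbit μ := mem_permOrbit.2 ⟨σ.symm, rfl⟩
      have hprod : orbitSum k μ * descentMonomial k σ ∈ V :=
        V.smul_mem ⟨orbitSum k μ, orbitSum_mem_symLaurent μ⟩ (Submodule.subset_span ⟨σ, rfl⟩)
      have hlower : ∑ w ∈ (permOrbit μ).erase (μ ∘ σ.symm),
          single (w + descentExp σ) (1 : k) ∈ V :=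
        V.sum_mem fun w hw => ih _ (weight_add_descentExp_lt hμ (mem_of_mem_erase hw) σ
          fun h => ne_of_mem_erase hw (add_right_cancel h))
      rw [orbitSum_mul_descentMonomial, ← add_sum_erase _ _ hσ] at hprod
      simpa [garsia] using V.sub_mem hprod hlower
  rintro x -
  induction x using AddMonoidAlgebra.induction_linear with
  | zero => exact V.zero_mem
  | add x y hx hy => exact V.add_mem hx hy
  | single ν r => simpa [smul_single'] using V.smul_of_tower_mem r (hsingle ν)

end Algebra

noncomputable def descentBasis (k : Type*) [CommRing k] (n : ℕ) :
    Module.Basis (Perm (Fin n)) (symLaurent k n) (AddMonoidAlgebra k (Fin n → ℤ)) :=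
  .mk linearIndependent_descentMonomial span_descentMonomial

end SymmetricLaurent

theorem laurent_free_over_symmetric_general (k : Type*) [Field k] (n : ℕ) :
    Nonempty (Module.Basis (Fin (Nat.factorial n)) (symLaurent k n)
      (AddMonoidAlgebra k (Fin n → ℤ))) :=
  ⟨(SymmetricLaurent.descentBasis k n).reindex
    (Fintype.equivFinOfCardEq (by simp [Fintype.card_perm]))⟩

/-- The Laurent polynomial ring `k[h₁^{±1},…,hₙ^{±1}]` is a free
module of rank `n!` over its subring of symmetric elements
`k[h₁^{±1},…,hₙ^{±1}]^{Sₙ}`. -/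
theorem laurent_free_over_symmetric (k : Type*) [Field k] [CharZero k] (n : ℕ) :
    Nonempty (Module.Basis (Fin (Nat.factorial n)) (symLaurent k n)
      (AddMonoidAlgebra k (Fin n → ℤ))) :=
  laurent_free_over_symmetric_general k n
end

section
/- Let $\mathcal{M}$ be a group of automorphisms of a field $L$, $W$ a finite group of automorphisms of $L$ acting on $\mathcal{M}$ by conjugation and satisfying the separation condition $\mathcal{M}\mathcal{M}^{-1} \cap W = \{e\}$, and set $K = L^W$. For $\mu \in \mathcal{M}$, let $W_\mu = \{w \in W : w\mu w^{-1} = \mu\}$. Then the field compositum $K \cdot \mu(K)$ inside $L$ equals the fixed field $L^{W_\mu}$. -/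
/-- The subfield of `L` of elements fixed by every automorphism in the set `P`. -/
def fixedSubfield {L : Type*} [Field L] (P : Set (L ≃+* L)) : Subfield L where
  carrier := {x | ∀ w ∈ P, w x = x}
  mul_mem' := by intro a b ha hb w hw; rw [map_mul, ha w hw, hb w hw]
  one_mem' := by intro w hw; rw [map_one]
  add_mem' := by intro a b ha hb w hw; rw [map_add, ha w hw, hb w hw]
  zero_mem' := by intro w hw; rw [map_zero]
  neg_mem' := by intro a ha w hw; rw [map_neg, ha w hw]
  inv_mem' := by intro a ha w hw; rw [map_inv₀, ha w hw]

/-- Let `𝓜` be a group of automorphisms of a field `L`, `W` a finite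
group of automorphisms of `L` acting on `𝓜` by conjugation and separating
(`𝓜𝓜⁻¹ ∩ W = {1}`), and `K = L^W`.  For `μ ∈ 𝓜` with stabilizer
`W_μ = {w ∈ W : wμw⁻¹ = μ}`, the compositum `K · μ(K)` inside `L` equals the fixed
field `L^{W_μ}`. -/
theorem compositum_eq_fixedField {L : Type*} [Field L]
    (M W : Subgroup (L ≃+* L)) [Finite W]
    (hnorm : ∀ w ∈ W, ∀ μ ∈ M, w * μ * w⁻¹ ∈ M)
    (hsep : ∀ μ ∈ M, ∀ ν ∈ M, μ * ν⁻¹ ∈ W → μ = ν)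
    (μ : L ≃+* L) (hμ : μ ∈ M) :
    Subfield.closure
        ((fixedSubfield (W : Set (L ≃+* L)) : Set L) ∪
          (⇑μ '' (fixedSubfield (W : Set (L ≃+* L)) : Set L))) =
      fixedSubfield {w : L ≃+* L | w ∈ W ∧ w * μ * w⁻¹ = μ} := by
  classical
  haveI : FaithfulSMul W L := ⟨fun {x y} h => Subtype.ext (RingEquiv.ext h)⟩
  -- `K0` is the fixed field as in mathlib's `FixedPoints` API.
  have hset : (fixedSubfield (W : Set (L ≃+* L)) : Set L)
      = (FixedPoints.subfield W L : Set L) := by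
    ext x
    constructor
    · intro hx w
      exact hx w.1 w.2
    · intro hx w hw
      exact hx ⟨w, hw⟩
  -- Artin: any ring automorphism of `L` fixing `K0` pointwise belongs to `W`.
  have artin : ∀ σ : L ≃+* L, (∀ x ∈ FixedPoints.subfield W L, σ x = x) → σ ∈ W := by
    intro σ hσ
    let σ' : L ≃ₐ[FixedPoints.subfield W L] L :=
      { σ with commutes' := fun x => hσ x x.2 }
    obtain ⟨w, hw⟩ := (FixedPoints.toAlgAut_bijective W L).surjective σ'
    have hww : (w : L ≃+* L) = σ := by
      ext x
      exact DFunLike.congr_fun hw x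
    exact hww ▸ w.2
  apply le_antisymm
  · -- easy inclusion: the compositum is fixed by `W_μ`
    rw [Subfield.closure_le]
    rintro x (hx | ⟨z, hz, rfl⟩) <;> intro w hw
    · exact hx w hw.1
    · have hcomm : w * μ = μ * w := by
        have := hw.2
        calc w * μ = w * μ * w⁻¹ * w := by group
        _ = μ * w := by rw [this]
      have h1 : (w * μ) z = w (μ z) := rfl
      have h2 : (μ * w) z = μ (w z) := rfl
      have : w (μ z) = μ (w z) := by rw [← h1, ← h2, hcomm]
      rw [this, hz w hw.1]
  · -- hard inclusion, via the Galois correspondence over `K0`.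
    intro y hy
    set E : Subfield L := Subfield.closure
        ((fixedSubfield (W : Set (L ≃+* L)) : Set L) ∪
          (⇑μ '' (fixedSubfield (W : Set (L ≃+* L)) : Set L))) with hE
    have halg : ∀ x, algebraMap (FixedPoints.subfield W L) L x ∈ E := by
      intro x
      exact Subfield.subset_closure (Or.inl (by rw [hset]; exact x.2))
    let E' : IntermediateField (FixedPoints.subfield W L) L :=
      Subfield.toIntermediateField E halg
    have key : ∀ σ : L ≃ₐ[FixedPoints.subfield W L] L,
        σ ∈ IntermediateField.fixingSubgroup E' → σ y = y := by
      intro σ hσ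
      have hfixK : ∀ x ∈ FixedPoints.subfield W L, σ.toRingEquiv x = x :=
        fun x hx => σ.commutes ⟨x, hx⟩
      have hwW : σ.toRingEquiv ∈ W := artin σ.toRingEquiv hfixK
      set w : L ≃+* L := σ.toRingEquiv with hwdef
      have hσ' : ∀ z ∈ (E' : Set L), σ z = z := by
        intro z hz
        exact hσ ⟨z, hz⟩
      have hfixμK : ∀ x ∈ FixedPoints.subfield W L, w (μ x) = μ x := by
        intro x hx
        exact hσ' (μ x) (Subfield.subset_closure (Or.inr ⟨x, by rw [hset]; exact hx, rfl⟩))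
      have hν : w * μ * w⁻¹ ∈ M := hnorm w hwW μ hμ
      have h2 : ∀ x ∈ FixedPoints.subfield W L, (μ⁻¹ * (w * μ * w⁻¹)) x = x := by
        intro x hx
        have hinv : w⁻¹ x = x := hx ⟨w⁻¹, inv_mem hwW⟩
        show μ⁻¹ (w (μ (w⁻¹ x))) = x
        rw [hinv, hfixμK x hx]
        exact μ.symm_apply_apply x
      have h3 : μ⁻¹ * (w * μ * w⁻¹) ∈ W := artin _ h2
      have h4 : μ⁻¹ * ((w * μ * w⁻¹)⁻¹)⁻¹ ∈ W := by simpa using h3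
      have h5 : μ⁻¹ = (w * μ * w⁻¹)⁻¹ :=
        hsep μ⁻¹ (inv_mem hμ) (w * μ * w⁻¹)⁻¹ (inv_mem hν) h4
      have hconj : w * μ * w⁻¹ = μ := by
        have := congrArg (·⁻¹) h5
        simpa using this.symm
      exact hy w ⟨hwW, hconj⟩
    have hmem : y ∈ IntermediateField.fixedField (IntermediateField.fixingSubgroup E') := by
      intro σ
      exact key σ.1 σ.2
    rw [IsGalois.fixedField_fixingSubgroup E'] at hmem
    exact hmem
end
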